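/- Let E be a Hausdorff topological vector space and let L ⊆ E be a simplex, i.e. the convex hull of a finite affinely independent set. If M : L → 2^L is a correspondence with weakly convex graph, then M has a fixed point: there exists x* ∈ L with x* ∈ M(x*). -/

import Mathlib

/-!
Apply weak convexity of the graph to the vertices `a i`: it yields `y i ∈ M (a i)` with
`∑ λ i • y i ∈ M (∑ λ i • a i)` for every `λ` in the standard simplex. The barycentric
coordinates of the `y i` form a row-stochastic matrix `P`, and any stationary distribution
`λ = λ P` makes `∑ λ i • y i = ∑ λ i • a i` a fixed point of `M`. A stationary distribution
exists because Cesàro averages of an orbit of `λ ↦ λ P` in the compact convex standard simplex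
are almost fixed, so each of their limit points is fixed.
-/

open Set

/-- A correspondence `T` has a *weakly convex graph* on `S`: for each finite family
`x 1, …, x n` in `S` there are `y i ∈ T (x i)` with
`∑ λ i • y i ∈ T (∑ λ i • x i)` for every `λ` in the standard simplex. -/
def WeaklyConvexGraphOn {E F : Type*} [AddCommGroup E] [Module ℝ E]
    [AddCommGroup F] [Module ℝ F] (T : E → Set F) (S : Set E) : Prop :=
  ∀ (n : ℕ) (x : Fin n → E), (∀ i, x i ∈ S) →
    ∃ y : Fin n → F, (∀ i, y i ∈ T (x i)) ∧
      ∀ lam ∈ stdSimplex ℝ (Fin n), (∑ i, lam i • y i) ∈ T (∑ i, lam i • x i)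

open Filter Topology Matrix

theorem Convex.birkhoffAverage_mem {𝕜 M α : Type*} [Field 𝕜] [LinearOrder 𝕜]
    [IsStrictOrderedRing 𝕜] [AddCommGroup M] [Module 𝕜 M] {s : Set M} (hs : Convex 𝕜 s)
    {f : α → α} {g : α → M} {n : ℕ} {x : α} (hn : n ≠ 0) (h : ∀ k < n, g (f^[k] x) ∈ s) :
    birkhoffAverage 𝕜 f g n x ∈ s := by
  rw [birkhoffAverage, birkhoffSum, Finset.smul_sum]
  refine hs.sum_mem (fun _ _ => by positivity) ?_ fun k hk => h k (Finset.mem_range.1 hk)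
  simp [hn]

theorem map_birkhoffAverage_id {R M F : Type*} [DivisionSemiring R] [AddCommMonoid M] [Module R M]
    [FunLike F M M] [AddMonoidHomClass F M M] (f : F) (n : ℕ) (x : M) :
    f (birkhoffAverage R f id n x) = birkhoffAverage R f id n (f x) := by
  rw [birkhoffAverage, birkhoffAverage, map_inv_natCast_smul f R R, birkhoffSum, birkhoffSum,
    map_sum]
  congr! 2 with k
  exact (Function.iterate_succ_apply' f k x).symm.trans (Function.iterate_succ_apply f k x)

theorem ContinuousLinearMap.exists_isFixedPt_of_mapsTo {E : Type*} [NormedAddCommGroup E]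
    [NormedSpace ℝ E] (T : E →L[ℝ] E) {K : Set E} (hconv : Convex ℝ K) (hcomp : IsCompact K)
    (hne : K.Nonempty) (hT : MapsTo T K K) : ∃ v ∈ K, Function.IsFixedPt T v := by
  obtain ⟨x, hx⟩ := hne
  set s : ℕ → E := fun n => birkhoffAverage ℝ T id (n + 1) x
  have hs : ∀ n, s n ∈ K := fun n =>
    hconv.birkhoffAverage_mem n.succ_ne_zero fun k _ => hT.iterate k hx
  have hdefect : Tendsto (fun n => T (s n) - s n) atTop (𝓝 0) := by
    have hbdd : Bornology.IsBounded (range fun k => id (T^[k] x)) :=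
      hcomp.isBounded.subset (range_subset_iff.2 fun k => hT.iterate k hx)
    simpa only [s, map_birkhoffAverage_id, Function.comp_def] using
      (tendsto_birkhoffAverage_apply_sub_birkhoffAverage ℝ hbdd).comp (tendsto_add_atTop_nat 1)
  obtain ⟨v, hv, φ, hφ, hlim⟩ := hcomp.tendsto_subseq hs
  refine ⟨v, hv, sub_eq_zero.1 (tendsto_nhds_unique ?_ (hdefect.comp hφ.tendsto_atTop))⟩
  exact ((T.continuous.tendsto v).comp hlim).sub hlim

theorem vecMul_mem_stdSimplex {𝕜 ι : Type*} [Field 𝕜] [LinearOrder 𝕜] [IsStrictOrderedRing 𝕜]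
    [Fintype ι] [DecidableEq ι] {P : Matrix ι ι 𝕜} (hP : P ∈ rowStochastic 𝕜 ι) {v : ι → 𝕜}
    (hv : v ∈ stdSimplex 𝕜 ι) : v ᵥ* P ∈ stdSimplex 𝕜 ι := by
  refine ⟨nonneg_vecMul_of_mem_rowStochastic hP hv.1, ?_⟩
  simpa [dotProduct_one] using vecMul_dotProduct_one_eq_one_rowStochastic hP
    (by simpa [dotProduct_one] using hv.2)

theorem exists_mem_stdSimplex_vecMul_eq_self {ι : Type*} [Fintype ι] [DecidableEq ι] [Nonempty ι]
    {P : Matrix ι ι ℝ} (hP : P ∈ rowStochastic ℝ ι) : ∃ v ∈ stdSimplex ℝ ι, v ᵥ* P = v :=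
  (LinearMap.toContinuousLinearMap P.vecMulLinear).exists_isFixedPt_of_mapsTo
    (convex_stdSimplex ℝ ι) (isCompact_stdSimplex ℝ ι) (nonempty_coe_sort.1 inferInstance)
    fun _ hv => vecMul_mem_stdSimplex hP hv

theorem convexHull_range_eq_image_stdSimplex {𝕜 E ι : Type*} [Field 𝕜] [LinearOrder 𝕜]
    [IsStrictOrderedRing 𝕜] [AddCommGroup E] [Module 𝕜 E] [Fintype ι] (a : ι → E) :
    convexHull 𝕜 (range a) = (fun w => ∑ i, w i • a i) '' stdSimplex 𝕜 ι := by
  classical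
  have : (fun w : ι → 𝕜 => ∑ i, w i • a i) = Fintype.linearCombination 𝕜 a :=
    funext fun w => (Fintype.linearCombination_apply 𝕜 a w).symm
  rw [this, ← convexHull_rangle_single_eq_stdSimplex, LinearMap.image_convexHull, ← range_comp]
  simp [Function.comp_def]

theorem sum_smul_sum_smul_eq_sum_vecMul_smul {R M ι : Type*} [CommSemiring R] [AddCommMonoid M]
    [Module R M] [Fintype ι] (v : ι → R) (P : Matrix ι ι R) (a : ι → M) :
    ∑ i, v i • ∑ j, P i j • a j = ∑ j, (v ᵥ* P) j • a j := by
  simp only [vecMul, dotProduct, Finset.smul_sum, Finset.sum_smul, smul_smul]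
  exact Finset.sum_comm

theorem stmt_19_general {E : Type*}
    [AddCommGroup E] [Module ℝ E]
    -- `L` is a simplex: the convex hull of a finite affinely independent set
    (n : ℕ) (hn : 0 < n) (a : Fin n → E)
    (L : Set E) (hL : L = convexHull ℝ (range a))
    (M : E → Set E) (hML : ∀ x ∈ L, M x ⊆ L)
    (hM : WeaklyConvexGraphOn M L) :
    ∃ x ∈ L, x ∈ M x := by
  have : Nonempty (Fin n) := ⟨⟨0, hn⟩⟩
  subst hL
  rw [convexHull_range_eq_image_stdSimplex] at hML hM ⊢
  have ha : ∀ i, a i ∈ (fun w => ∑ j, w j • a j) '' stdSimplex ℝ (Fin n) := fun i =>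
    ⟨Pi.single i 1, single_mem_stdSimplex ℝ i, by simp [Pi.single_apply]⟩
  obtain ⟨y, hyM, hy⟩ := hM n a ha
  choose P hP hPy using fun i => hML _ (ha i) (hyM i)
  have hPstoch : P ∈ rowStochastic ℝ (Fin n) :=
    mem_rowStochastic_iff_sum.2 ⟨fun i => (hP i).1, fun i => (hP i).2⟩
  obtain ⟨v, hv, hvP⟩ := exists_mem_stdSimplex_vecMul_eq_self hPstoch
  refine ⟨∑ i, v i • a i, mem_image_of_mem _ hv, ?_⟩
  simpa only [← hPy, sum_smul_sum_smul_eq_sum_vecMul_smul v P a, hvP] using hy v hv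

/-- a correspondence of a simplex into itself with weakly convex
graph has a fixed point. -/
theorem stmt_19 {E : Type*}
    [AddCommGroup E] [Module ℝ E] [TopologicalSpace E] [IsTopologicalAddGroup E]
    [ContinuousSMul ℝ E] [T2Space E]
    -- `L` is a simplex: the convex hull of a finite affinely independent set
    (n : ℕ) (hn : 0 < n) (a : Fin n → E) (ha : AffineIndependent ℝ a)
    (L : Set E) (hL : L = convexHull ℝ (range a))
    (M : E → Set E) (hML : ∀ x ∈ L, M x ⊆ L)
    (hM : WeaklyConvexGraphOn M L) :
    ∃ x ∈ L, x ∈ M x :=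
  stmt_19_general n hn a L hL M hML hM
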